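/- arXiv:0911.5473 — 4 statements merged into one kernel-verified Lean document; each statement's English description precedes it below -/
import Mathlib

section
/- Under the same assumptions (X admits an exponential φ-coupling with constants C_φ, β, invariant measure π, φ ∈ L_1(π)), for every p ∈ (1,∞) and every f ∈ L_{p,φ} with ∫ f dπ = 0, one has ‖T_t f‖_{p,φ}^p ≤ 2^p C_φ^{p/q} e^{-βpt/q} ‖f‖_{p,φ}^p for all t ≥ 0. In particular β/q = β - β/p is a growth bound for the restriction of {T_t} to the subspace L_{p,φ}^0 of mean-zero elements of L_{p,φ}. -/
open MeasureTheory Filter Set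

open scoped ENNReal

/-!
Fix `x` and write `μ = Z x t`, `g = |f|^p φ^{-p/q}`. Since `π f = 0` and the marginals of `μ` are
`P t x` and `π`, `T_t f(x) = ∫ (f z₁ - f z₂) dμ`, and the integrand vanishes on the diagonal.
Hölder's inequality against the weight `φ z₁ + φ z₂` on the off-diagonal then gives
`|T_t f(x)|^p ≤ 2^{p-1} (T_t g(x) + π g) (C_φ e^{-βt} φ(x))^{p/q}`, and integrating in `π` with
`π (T_t g) = π g` produces the constant `2^p`.

The kernel `x ↦ P t x` is not assumed measurable, so the invariance `π T_t = π` only holds for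
lower integrals. It is used through measurable majorants of `x ↦ ∫ g d(P t x)` whose
`π`-integral is at most `π g`; these are built from indicators (complements turn the lower
integral of `P t x Aᶜ` into an upper bound for `P t x A`) and extended by Fatou's lemma.
-/

namespace ENNReal

theorem add_rpow_div_add_rpow_le (a b c d : ℝ≥0∞) {p r : ℝ} (hp : 1 ≤ p) (hr : 0 ≤ r) :
    (a + b) ^ p / (c + d) ^ r ≤ 2 ^ (p - 1) * (a ^ p / c ^ r + b ^ p / d ^ r) := by
  calc (a + b) ^ p / (c + d) ^ r ≤ 2 ^ (p - 1) * (a ^ p + b ^ p) / (c + d) ^ r :=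
        ENNReal.div_le_div_right (rpow_add_le_mul_rpow_add_rpow a b hp) _
    _ = 2 ^ (p - 1) * (a ^ p / (c + d) ^ r + b ^ p / (c + d) ^ r) := by
        rw [mul_div_assoc, ENNReal.div_add_div_same]
    _ ≤ 2 ^ (p - 1) * (a ^ p / c ^ r + b ^ p / d ^ r) := by
        gcongr
        · exact le_self_add
        · exact le_add_self

theorem lintegral_rpow_le_lintegral_rpow_div_mul {α : Type*} [MeasurableSpace α]
    (μ : Measure α) {p q : ℝ} (hpq : p.HolderConjugate q) {u v : α → ℝ≥0∞}
    (hu : AEMeasurable u μ) (hv : AEMeasurable v μ) (hv0 : ∀ a, v a ≠ 0) (hvtop : ∀ a, v a ≠ ∞) :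
    (∫⁻ a, u a ∂μ) ^ p ≤ (∫⁻ a, u a ^ p / v a ^ (p / q) ∂μ) * (∫⁻ a, v a ∂μ) ^ (p / q) := by
  have hp := hpq.pos
  have hq := hpq.symm.pos
  have hsplit : ∀ a, u a = (u a / v a ^ (1 / q)) * v a ^ (1 / q) := fun a =>
    (ENNReal.div_mul_cancel (rpow_pos (pos_iff_ne_zero.2 (hv0 a)) (hvtop a)).ne'
      (rpow_ne_top_of_nonneg (by positivity) (hvtop a))).symm
  have hholder : ∫⁻ a, u a ∂μ ≤ (∫⁻ a, (u a / v a ^ (1 / q)) ^ p ∂μ) ^ (1 / p) *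
      (∫⁻ a, (v a ^ (1 / q)) ^ q ∂μ) ^ (1 / q) := by
    simpa only [Pi.mul_apply, ← hsplit] using lintegral_mul_le_Lp_mul_Lq μ hpq
      (f := fun a => u a / v a ^ (1 / q)) (hu.div (hv.pow_const _)) (hv.pow_const (1 / q))
  calc (∫⁻ a, u a ∂μ) ^ p
      ≤ ((∫⁻ a, (u a / v a ^ (1 / q)) ^ p ∂μ) ^ (1 / p) *
          (∫⁻ a, (v a ^ (1 / q)) ^ q ∂μ) ^ (1 / q)) ^ p := by gcongr
    _ = (∫⁻ a, u a ^ p / v a ^ (p / q) ∂μ) * (∫⁻ a, v a ∂μ) ^ (p / q) := by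
      have hpow : ∀ a, (u a / v a ^ (1 / q)) ^ p = u a ^ p / v a ^ (p / q) := fun a => by
        rw [ENNReal.div_rpow_of_nonneg _ _ hp.le, ← rpow_mul, one_div_mul_eq_div]
      have hq1 : ∀ a, (v a ^ (1 / q)) ^ q = v a := fun a => by
        rw [← rpow_mul, one_div_mul_cancel hq.ne', rpow_one]
      simp only [hpow, hq1]
      rw [mul_rpow_of_nonneg _ _ hp.le, ← rpow_mul, ← rpow_mul, one_div_mul_cancel hp.ne',
        rpow_one, one_div_mul_eq_div]

theorem ofReal_rpow_div_rpow {a b p r : ℝ} (ha : 0 ≤ a) (hb : 0 < b) (hp : 0 ≤ p) (hr : 0 ≤ r) :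
    ENNReal.ofReal (a ^ p / b ^ r) = ENNReal.ofReal a ^ p / ENNReal.ofReal b ^ r := by
  rw [ofReal_div_of_pos (Real.rpow_pos_of_pos hb r), ofReal_rpow_of_nonneg ha hp,
    ofReal_rpow_of_nonneg hb.le hr]

end ENNReal

theorem abs_le_rpow_div_rpow_add {p q : ℝ} (hpq : p.HolderConjugate q) (a : ℝ) {b : ℝ}
    (hb : 0 < b) : |a| ≤ |a| ^ p / b ^ (p / q) + b := by
  rcases le_or_gt |a| b with hab | hab
  · exact le_add_of_nonneg_of_le (by positivity) hab
  · have ha : 0 < |a| := hb.trans hab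
    have hpq0 : 0 ≤ p / q := (div_pos hpq.pos hpq.symm.pos).le
    calc |a| = |a| ^ p / |a| ^ (p / q) := by
          rw [← Real.rpow_sub ha, hpq.div_conj_eq_sub_one, sub_sub_cancel, Real.rpow_one]
      _ ≤ |a| ^ p / b ^ (p / q) := by gcongr
      _ ≤ |a| ^ p / b ^ (p / q) + b := le_add_of_nonneg_right hb.le

theorem integrable_of_integrable_rpow_div_rpow {α : Type*} [MeasurableSpace α] {μ : Measure α}
    {f φ : α → ℝ} (hf : AEStronglyMeasurable f μ) (hφ : Integrable φ μ) (hφ0 : ∀ x, 0 < φ x)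
    {p q : ℝ} (hpq : p.HolderConjugate q) (h : Integrable (fun x => |f x| ^ p / φ x ^ (p / q)) μ) :
    Integrable f μ :=
  (h.add hφ).mono' hf <| ae_of_all _ fun x =>
    (Real.norm_eq_abs _).trans_le (abs_le_rpow_div_rpow_add hpq _ (hφ0 x))

theorem integral_le_of_lintegral_ofReal_le {α : Type*} [MeasurableSpace α] {μ : Measure α}
    {h : α → ℝ} (hh : ∀ x, 0 ≤ h x) {b : ℝ} (hb : 0 ≤ b)
    (hle : ∫⁻ x, ENNReal.ofReal (h x) ∂μ ≤ ENNReal.ofReal b) : ∫ x, h x ∂μ ≤ b := by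
  refine (Real.le_norm_self _).trans <| (norm_integral_le_lintegral_norm h).trans ?_
  simpa only [Real.norm_of_nonneg (hh _)] using ENNReal.toReal_le_of_le_ofReal hb hle

section InvariantKernel

variable {𝕏 : Type*} [MeasurableSpace 𝕏] (P : 𝕏 → Measure 𝕏) [∀ x, IsProbabilityMeasure (P x)]
  (π : Measure 𝕏) [IsFiniteMeasure π]

theorem exists_measurable_ge_measure_of_invariant
    (hinv : ∀ A, MeasurableSet A → ∫⁻ x, P x A ∂π = π A) {A : Set 𝕏} (hA : MeasurableSet A) :
    ∃ Φ : 𝕏 → ℝ≥0∞, Measurable Φ ∧ (∀ x, P x A ≤ Φ x) ∧ ∫⁻ x, Φ x ∂π ≤ π A := by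
  obtain ⟨w, hw, hwle, hweq⟩ := exists_measurable_le_lintegral_eq π fun x => P x Aᶜ
  have hw1 : ∀ x, w x ≤ 1 := fun x => (hwle x).trans prob_le_one
  refine ⟨fun x => 1 - w x, measurable_const.sub hw, fun x => ?_, ?_⟩
  · rw [← compl_compl A, prob_compl_eq_one_sub hA.compl]
    exact tsub_le_tsub_left (hwle x) 1
  · rw [lintegral_sub hw ((lintegral_mono hw1).trans_lt (by simp)).ne (ae_of_all _ hw1),
      ← hweq, hinv _ hA.compl, lintegral_one, measure_compl hA (measure_ne_top _ _),
      ENNReal.sub_sub_cancel (measure_ne_top _ _) (measure_mono (subset_univ A))]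

theorem exists_measurable_ge_lintegral_of_invariant
    (hinv : ∀ A, MeasurableSet A → ∫⁻ x, P x A ∂π = π A) {g : 𝕏 → ℝ≥0∞} (hg : Measurable g) :
    ∃ Φ : 𝕏 → ℝ≥0∞, Measurable Φ ∧ (∀ x, ∫⁻ y, g y ∂(P x) ≤ Φ x) ∧
      ∫⁻ x, Φ x ∂π ≤ ∫⁻ y, g y ∂π := by
  refine Measurable.ennreal_induction ?indicator ?add ?iSup hg
  case indicator =>
    intro c A hA
    obtain ⟨Φ, hΦ, hPΦ, hΦπ⟩ := exists_measurable_ge_measure_of_invariant P π hinv hA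
    refine ⟨fun x => c * Φ x, hΦ.const_mul c, fun x => ?_, ?_⟩
    · rw [lintegral_indicator_const hA]
      exact mul_le_mul_right (hPΦ x) c
    · rw [lintegral_const_mul c hΦ, lintegral_indicator_const hA]
      exact mul_le_mul_right hΦπ c
  case add =>
    intro f g _ hf _ ihf ihg
    obtain ⟨Φ, hΦ, hPΦ, hΦπ⟩ := ihf
    obtain ⟨Ψ, hΨ, hPΨ, hΨπ⟩ := ihg
    refine ⟨fun x => Φ x + Ψ x, hΦ.add hΨ, fun x => ?_, ?_⟩
    · rw [Pi.add_def, lintegral_add_left hf]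
      exact add_le_add (hPΦ x) (hPΨ x)
    · rw [lintegral_add_left hΦ, Pi.add_def, lintegral_add_left hf]
      exact add_le_add hΦπ hΨπ
  case iSup =>
    intro f hf hmono ih
    choose Φ hΦ hPΦ hΦπ using ih
    refine ⟨fun x => liminf (fun n => Φ n x) atTop, Measurable.liminf hΦ, fun x => ?_, ?_⟩
    · rw [lintegral_iSup hf hmono]
      refine iSup_le fun m => le_liminf_of_le (by isBoundedDefault) ?_
      filter_upwards [eventually_ge_atTop m] with n hmn
      exact (lintegral_mono (hmono hmn)).trans (hPΦ n x)
    · calc ∫⁻ x, liminf (fun n => Φ n x) atTop ∂π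
          ≤ liminf (fun n => ∫⁻ x, Φ n x ∂π) atTop := lintegral_liminf_le hΦ
        _ ≤ liminf (fun n => ∫⁻ y, f n y ∂π) atTop := liminf_le_liminf (Eventually.of_forall hΦπ)
        _ ≤ ∫⁻ y, ⨆ n, f n y ∂π := liminf_le_of_le (by isBoundedDefault) fun b hb =>
            let ⟨n, hn⟩ := hb.exists_forall_of_atTop
            (hn n le_rfl).trans (lintegral_mono fun y => le_iSup (fun n => f n y) n)

theorem ae_integrable_of_invariant (hinv : ∀ A, MeasurableSet A → ∫⁻ x, P x A ∂π = π A)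
    {E : Type*} [NormedAddCommGroup E] {f : 𝕏 → E} (hf : StronglyMeasurable f)
    (hfπ : Integrable f π) : ∀ᵐ x ∂π, Integrable f (P x) := by
  obtain ⟨Φ, hΦ, hPΦ, hΦπ⟩ := exists_measurable_ge_lintegral_of_invariant P π hinv hf.enorm
  filter_upwards [ae_lt_top hΦ (hΦπ.trans_lt hfπ.hasFiniteIntegral).ne] with x hx
  exact ⟨hf.aestronglyMeasurable, (hPΦ x).trans_lt hx⟩

end InvariantKernel

section Coupling

variable {𝕏 : Type*} [MeasurableSpace 𝕏]

theorem ofReal_abs_integral_sub_le_setLIntegral_ne (μ : Measure (𝕏 × 𝕏)) {f : 𝕏 → ℝ}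
    (h₁ : Integrable (fun z => f z.1) μ) (h₂ : Integrable (fun z => f z.2) μ) :
    ENNReal.ofReal |∫ z, f z.1 ∂μ - ∫ z, f z.2 ∂μ| ≤
      ∫⁻ z in {z | z.1 ≠ z.2}, ENNReal.ofReal |f z.1| + ENNReal.ofReal |f z.2| ∂μ := by
  have hsupp : (fun z : 𝕏 × 𝕏 => ENNReal.ofReal |f z.1 - f z.2|).support ⊆ {z | z.1 ≠ z.2} :=
    fun z hz hdiag => hz (by simp [hdiag])
  calc ENNReal.ofReal |∫ z, f z.1 ∂μ - ∫ z, f z.2 ∂μ|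
      ≤ ENNReal.ofReal (∫ z, |f z.1 - f z.2| ∂μ) := by
        rw [← integral_sub h₁ h₂]
        exact ENNReal.ofReal_le_ofReal abs_integral_le_integral_abs
    _ = ∫⁻ z in {z | z.1 ≠ z.2}, ENNReal.ofReal |f z.1 - f z.2| ∂μ := by
        rw [setLIntegral_eq_of_support_subset hsupp]
        exact ofReal_integral_eq_lintegral_ofReal (h₁.sub h₂).abs
          (ae_of_all _ fun _ => abs_nonneg _)
    _ ≤ ∫⁻ z in {z | z.1 ≠ z.2}, ENNReal.ofReal |f z.1| + ENNReal.ofReal |f z.2| ∂μ := by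
        gcongr with z
        rw [← ENNReal.ofReal_add (abs_nonneg _) (abs_nonneg _)]
        exact ENNReal.ofReal_le_ofReal (abs_sub _ _)

variable {ν π : Measure 𝕏} (μ : Measure (𝕏 × 𝕏))

theorem ofReal_abs_integral_rpow_le_of_coupling (hν : μ.map Prod.fst = ν)
    (hπ : μ.map Prod.snd = π) {φ f : 𝕏 → ℝ} (hφ : Measurable φ) (hφ0 : ∀ y, 0 < φ y)
    (hf : Measurable f) (hfπ : Integrable f π) (hf0 : ∫ y, f y ∂π = 0)
    {p q : ℝ} (hpq : p.HolderConjugate q) :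
    ENNReal.ofReal |∫ y, f y ∂ν| ^ p ≤
      2 ^ (p - 1) * ((∫⁻ y, ENNReal.ofReal |f y| ^ p / ENNReal.ofReal (φ y) ^ (p / q) ∂ν) +
          ∫⁻ y, ENNReal.ofReal |f y| ^ p / ENNReal.ofReal (φ y) ^ (p / q) ∂π) *
        (∫⁻ z in {z | z.1 ≠ z.2}, ENNReal.ofReal (φ z.1) + ENNReal.ofReal (φ z.2) ∂μ) ^
          (p / q) := by
  set w : 𝕏 → ℝ≥0∞ := fun y => ENNReal.ofReal |f y| ^ p / ENNReal.ofReal (φ y) ^ (p / q)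
  have hw : Measurable w := by fun_prop
  have hp := hpq.pos
  by_cases hfν : Integrable f ν
  swap
  · simp [integral_undef hfν, ENNReal.zero_rpow_of_pos hp]
  have h₁ : Integrable (fun z => f z.1) μ := (hν ▸ hfν).comp_measurable measurable_fst
  have h₂ : Integrable (fun z => f z.2) μ := (hπ ▸ hfπ).comp_measurable measurable_snd
  have hdiff : ∫ y, f y ∂ν = ∫ z, f z.1 ∂μ - ∫ z, f z.2 ∂μ := by
    rw [← integral_map measurable_fst.aemeasurable hf.aestronglyMeasurable,
      ← integral_map measurable_snd.aemeasurable hf.aestronglyMeasurable, hν, hπ, hf0, sub_zero]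
  calc ENNReal.ofReal |∫ y, f y ∂ν| ^ p
      ≤ (∫⁻ z in {z | z.1 ≠ z.2}, ENNReal.ofReal |f z.1| + ENNReal.ofReal |f z.2| ∂μ) ^ p := by
        rw [hdiff]
        gcongr
        exact ofReal_abs_integral_sub_le_setLIntegral_ne μ h₁ h₂
    _ ≤ (∫⁻ z in {z | z.1 ≠ z.2}, (ENNReal.ofReal |f z.1| + ENNReal.ofReal |f z.2|) ^ p /
            (ENNReal.ofReal (φ z.1) + ENNReal.ofReal (φ z.2)) ^ (p / q) ∂μ) *
          (∫⁻ z in {z | z.1 ≠ z.2}, ENNReal.ofReal (φ z.1) + ENNReal.ofReal (φ z.2) ∂μ) ^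
            (p / q) :=
        ENNReal.lintegral_rpow_le_lintegral_rpow_div_mul _ hpq (by fun_prop) (by fun_prop)
          (fun z => (add_pos_of_pos_of_nonneg (ENNReal.ofReal_pos.2 (hφ0 z.1)) zero_le).ne')
          (fun _ => by finiteness)
    _ ≤ (∫⁻ z, 2 ^ (p - 1) * (w z.1 + w z.2) ∂μ) *
          (∫⁻ z in {z | z.1 ≠ z.2}, ENNReal.ofReal (φ z.1) + ENNReal.ofReal (φ z.2) ∂μ) ^
            (p / q) := by
        gcongr ?_ * _
        refine (setLIntegral_le_lintegral _ _).trans (lintegral_mono fun z => ?_)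
        exact ENNReal.add_rpow_div_add_rpow_le _ _ _ _ hpq.lt.le (div_pos hp hpq.symm.pos).le
    _ = _ := by
        rw [lintegral_const_mul _ (by fun_prop), lintegral_add_left (by fun_prop),
          ← lintegral_map hw measurable_fst, ← lintegral_map hw measurable_snd, hν, hπ]

theorem setLIntegral_ofReal_add_le_of_setIntegral_le (hν : μ.map Prod.fst = ν)
    (hπ : μ.map Prod.snd = π) {φ : 𝕏 → ℝ} (hφ0 : ∀ y, 0 ≤ φ y)
    (hφν : Integrable φ ν) (hφπ : Integrable φ π) {s : Set (𝕏 × 𝕏)} {c : ℝ}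
    (hs : ∫ z in s, φ z.1 + φ z.2 ∂μ ≤ c) :
    ∫⁻ z in s, ENNReal.ofReal (φ z.1) + ENNReal.ofReal (φ z.2) ∂μ ≤ ENNReal.ofReal c := by
  have hint : Integrable (fun z => φ z.1 + φ z.2) μ :=
    ((hν ▸ hφν).comp_measurable measurable_fst).add ((hπ ▸ hφπ).comp_measurable measurable_snd)
  simp_rw [← ENNReal.ofReal_add (hφ0 _) (hφ0 _)]
  rw [← ofReal_integral_eq_lintegral_ofReal hint.integrableOn
    (ae_of_all _ fun z => add_nonneg (hφ0 z.1) (hφ0 z.2))]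
  exact ENNReal.ofReal_le_ofReal hs

theorem ofReal_rpow_div_le_of_coupling (hν : μ.map Prod.fst = ν) (hπ : μ.map Prod.snd = π)
    {φ f : 𝕏 → ℝ} (hφ : Measurable φ) (hφ0 : ∀ y, 0 < φ y)
    (hφν : Integrable φ ν) (hφπ : Integrable φ π) (hf : Measurable f) (hfπ : Integrable f π)
    (hf0 : ∫ y, f y ∂π = 0) {p q : ℝ} (hpq : p.HolderConjugate q) {K a : ℝ} (hK : 0 ≤ K)
    (ha : 0 < a) (hcoup : ∫ z in {z | z.1 ≠ z.2}, φ z.1 + φ z.2 ∂μ ≤ K * a) :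
    ENNReal.ofReal (|∫ y, f y ∂ν| ^ p / a ^ (p / q)) ≤
      2 ^ (p - 1) * ENNReal.ofReal K ^ (p / q) *
        ((∫⁻ y, ENNReal.ofReal |f y| ^ p / ENNReal.ofReal (φ y) ^ (p / q) ∂ν) +
          ∫⁻ y, ENNReal.ofReal |f y| ^ p / ENNReal.ofReal (φ y) ^ (p / q) ∂π) := by
  have hpq0 : 0 ≤ p / q := (div_pos hpq.pos hpq.symm.pos).le
  rw [ENNReal.ofReal_rpow_div_rpow (abs_nonneg _) ha hpq.pos.le hpq0,
    ENNReal.div_le_iff (by positivity) (by finiteness)]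
  calc ENNReal.ofReal |∫ y, f y ∂ν| ^ p
      ≤ 2 ^ (p - 1) * ((∫⁻ y, ENNReal.ofReal |f y| ^ p / ENNReal.ofReal (φ y) ^ (p / q) ∂ν) +
          ∫⁻ y, ENNReal.ofReal |f y| ^ p / ENNReal.ofReal (φ y) ^ (p / q) ∂π) *
        ENNReal.ofReal (K * a) ^ (p / q) := by
        refine (ofReal_abs_integral_rpow_le_of_coupling μ hν hπ hφ hφ0 hf hfπ hf0 hpq).trans ?_
        gcongr
        exact setLIntegral_ofReal_add_le_of_setIntegral_le μ hν hπ (fun y => (hφ0 y).le) hφν hφπ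
          hcoup
    _ = _ := by
        rw [ENNReal.ofReal_mul hK, ENNReal.mul_rpow_of_nonneg _ _ hpq0]
        ring

end Coupling

section MarkovCoupling

variable {𝕏 : Type*} [MeasurableSpace 𝕏] (P : 𝕏 → Measure 𝕏) [∀ x, IsProbabilityMeasure (P x)]
  (π : Measure 𝕏) [IsProbabilityMeasure π]

theorem lintegral_ofReal_rpow_div_le_of_coupling
    (hinv : ∀ A, MeasurableSet A → ∫⁻ x, P x A ∂π = π A) (Z : 𝕏 → Measure (𝕏 × 𝕏))
    (hZ₁ : ∀ x, (Z x).map Prod.fst = P x) (hZ₂ : ∀ x, (Z x).map Prod.snd = π)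
    {φ f : 𝕏 → ℝ} (hφ : Measurable φ) (hφ0 : ∀ y, 0 < φ y) (hφπ : Integrable φ π)
    (hf : Measurable f) (hfπ : Integrable f π) (hf0 : ∫ y, f y ∂π = 0)
    {p q : ℝ} (hpq : p.HolderConjugate q) {K : ℝ} (hK : 0 ≤ K)
    (hcoup : ∀ x, ∫ z in {z | z.1 ≠ z.2}, φ z.1 + φ z.2 ∂(Z x) ≤ K * φ x) :
    ∫⁻ x, ENNReal.ofReal (|∫ y, f y ∂(P x)| ^ p / φ x ^ (p / q)) ∂π ≤
      2 ^ p * ENNReal.ofReal K ^ (p / q) *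
        ∫⁻ y, ENNReal.ofReal |f y| ^ p / ENNReal.ofReal (φ y) ^ (p / q) ∂π := by
  set w : 𝕏 → ℝ≥0∞ := fun y => ENNReal.ofReal |f y| ^ p / ENNReal.ofReal (φ y) ^ (p / q)
  set c : ℝ≥0∞ := 2 ^ (p - 1) * ENNReal.ofReal K ^ (p / q)
  obtain ⟨Φ, hΦ, hwΦ, hΦπ⟩ :=
    exists_measurable_ge_lintegral_of_invariant P π hinv (show Measurable w by fun_prop)
  have hpoint : ∀ᵐ x ∂π, ENNReal.ofReal (|∫ y, f y ∂(P x)| ^ p / φ x ^ (p / q)) ≤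
      c * (Φ x + ∫⁻ y, w y ∂π) := by
    filter_upwards [ae_integrable_of_invariant P π hinv hφ.stronglyMeasurable hφπ] with x hφx
    refine (ofReal_rpow_div_le_of_coupling (Z x) (hZ₁ x) (hZ₂ x) hφ hφ0 hφx hφπ hf hfπ hf0 hpq
      hK (hφ0 x) (hcoup x)).trans ?_
    gcongr
    exact hwΦ x
  have htwo : (2 : ℝ≥0∞) ^ (p - 1) * 2 = 2 ^ p := by
    conv_rhs => rw [← sub_add_cancel p 1, ENNReal.rpow_add _ _ two_ne_zero ENNReal.ofNat_ne_top]
    rw [ENNReal.rpow_one]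
  calc ∫⁻ x, ENNReal.ofReal (|∫ y, f y ∂(P x)| ^ p / φ x ^ (p / q)) ∂π
      ≤ ∫⁻ x, c * (Φ x + ∫⁻ y, w y ∂π) ∂π := lintegral_mono_ae hpoint
    _ = c * (∫⁻ x, Φ x ∂π + ∫⁻ y, w y ∂π) := by
        rw [lintegral_const_mul _ (by fun_prop), lintegral_add_right _ measurable_const,
          lintegral_const, measure_univ, mul_one]
    _ ≤ c * (∫⁻ y, w y ∂π + ∫⁻ y, w y ∂π) := by gcongr
    _ = 2 ^ p * ENNReal.ofReal K ^ (p / q) * ∫⁻ y, w y ∂π := by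
        rw [← two_mul, ← htwo]
        ring

end MarkovCoupling

theorem Lp_phi_growth_bound_of_exponential_phi_coupling_general
    {𝕏 : Type*} [MeasurableSpace 𝕏]
    (P : ℝ → 𝕏 → Measure 𝕏) [∀ t x, IsProbabilityMeasure (P t x)]
    (π : Measure 𝕏) [IsProbabilityMeasure π]
    (hinv : ∀ t : ℝ, 0 ≤ t → ∀ A : Set 𝕏, MeasurableSet A →
      ∫⁻ x, P t x A ∂π = π A)
    (φ : 𝕏 → ℝ) (hφmeas : Measurable φ) (hφ1 : ∀ x, 1 ≤ φ x) (hφint : Integrable φ π)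
    (Cφ β : ℝ) (hCφ : 0 < Cφ)
    (Z : 𝕏 → ℝ → Measure (𝕏 × 𝕏))
    (hZ1 : ∀ x t, 0 ≤ t → (Z x t).map Prod.fst = P t x)
    (hZ2 : ∀ x t, 0 ≤ t → (Z x t).map Prod.snd = π)
    (hZcoupling : ∀ x t, 0 ≤ t →
      ∫ p in {p : 𝕏 × 𝕏 | p.1 ≠ p.2}, (φ p.1 + φ p.2) ∂(Z x t)
        ≤ Cφ * Real.exp (-β * t) * φ x)
    (p q : ℝ) (hp : 1 < p) (hpq : 1 / p + 1 / q = 1)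
    (f : 𝕏 → ℝ) (hfmeas : Measurable f) (hf0 : ∫ x, f x ∂π = 0)
    (hfLpφ : Integrable (fun x => |f x| ^ p / φ x ^ (p / q)) π)
    (t : ℝ) (ht : 0 ≤ t) :
    ∫ x, |∫ y, f y ∂(P t x)| ^ p / φ x ^ (p / q) ∂π
      ≤ 2 ^ p * Cφ ^ (p / q) * Real.exp (-(β * p / q) * t) *
        ∫ x, |f x| ^ p / φ x ^ (p / q) ∂π := by
  have hpq' : p.HolderConjugate q := Real.holderConjugate_iff.2 ⟨hp, by simpa [one_div] using hpq⟩
  have hpq0 : 0 ≤ p / q := (div_pos hpq'.pos hpq'.symm.pos).le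
  have hφ0 : ∀ x, 0 < φ x := fun x => one_pos.trans_le (hφ1 x)
  have hfπ :=
    integrable_of_integrable_rpow_div_rpow hfmeas.aestronglyMeasurable hφint hφ0 hpq' hfLpφ
  have hlint := lintegral_ofReal_rpow_div_le_of_coupling (P t) π (hinv t ht) (Z · t)
    (hZ1 · t ht) (hZ2 · t ht) hφmeas hφ0 hφint hfmeas hfπ hf0 hpq' (by positivity)
    (hZcoupling · t ht)
  have hweight0 : ∀ a x, 0 ≤ |a| ^ p / φ x ^ (p / q) := fun a x =>
    div_nonneg (Real.rpow_nonneg (abs_nonneg a) p) (Real.rpow_nonneg (hφ0 x).le _)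
  have hnorm : ∫⁻ y, ENNReal.ofReal |f y| ^ p / ENNReal.ofReal (φ y) ^ (p / q) ∂π =
      ENNReal.ofReal (∫ x, |f x| ^ p / φ x ^ (p / q) ∂π) := by
    rw [ofReal_integral_eq_lintegral_ofReal hfLpφ (ae_of_all _ fun x => hweight0 (f x) x)]
    exact lintegral_congr fun y =>
      (ENNReal.ofReal_rpow_div_rpow (abs_nonneg _) (hφ0 y) hpq'.pos.le hpq0).symm
  have hconst : (2 : ℝ≥0∞) ^ p * ENNReal.ofReal (Cφ * Real.exp (-β * t)) ^ (p / q) =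
      ENNReal.ofReal (2 ^ p * Cφ ^ (p / q) * Real.exp (-(β * p / q) * t)) := by
    rw [← ENNReal.ofReal_ofNat 2, ENNReal.ofReal_rpow_of_pos two_pos,
      ENNReal.ofReal_rpow_of_nonneg (by positivity) hpq0, ← ENNReal.ofReal_mul (by positivity),
      Real.mul_rpow hCφ.le (Real.exp_pos _).le, ← Real.exp_mul, mul_assoc]
    ring_nf
  rw [hnorm, hconst, ← ENNReal.ofReal_mul (by positivity)] at hlint
  exact integral_le_of_lintegral_ofReal_le (fun x => hweight0 _ x)
    (mul_nonneg (by positivity) (integral_nonneg fun x => hweight0 (f x) x)) hlint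

/-- `L_{p,φ}` convergence rate: for a Markov process admitting an exponential `φ`-coupling,
`‖T_t f‖_{p,φ}^p ≤ 2^p C_φ^{p/q} e^{-βpt/q} ‖f‖_{p,φ}^p` for mean-zero `f ∈ L_{p,φ}`;
in particular `β/q` is a growth bound on `L_{p,φ}^0`. -/
theorem Lp_phi_growth_bound_of_exponential_phi_coupling
    {𝕏 : Type*} [MeasurableSpace 𝕏]
    (P : ℝ → 𝕏 → Measure 𝕏) [∀ t x, IsProbabilityMeasure (P t x)]
    (π : Measure 𝕏) [IsProbabilityMeasure π]
    (hinv : ∀ t : ℝ, 0 ≤ t → ∀ A : Set 𝕏, MeasurableSet A →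
      ∫⁻ x, P t x A ∂π = π A)
    (φ : 𝕏 → ℝ) (hφmeas : Measurable φ) (hφ1 : ∀ x, 1 ≤ φ x) (hφint : Integrable φ π)
    (Cφ β : ℝ) (hCφ : 0 < Cφ) (hβ : 0 < β)
    (Z : 𝕏 → ℝ → Measure (𝕏 × 𝕏))
    (hZ1 : ∀ x t, 0 ≤ t → (Z x t).map Prod.fst = P t x)
    (hZ2 : ∀ x t, 0 ≤ t → (Z x t).map Prod.snd = π)
    (hZcoupling : ∀ x t, 0 ≤ t →
      ∫ p in {p : 𝕏 × 𝕏 | p.1 ≠ p.2}, (φ p.1 + φ p.2) ∂(Z x t)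
        ≤ Cφ * Real.exp (-β * t) * φ x)
    (p q : ℝ) (hp : 1 < p) (hpq : 1 / p + 1 / q = 1)
    (f : 𝕏 → ℝ) (hfmeas : Measurable f) (hf0 : ∫ x, f x ∂π = 0)
    (hfLpφ : Integrable (fun x => |f x| ^ p / φ x ^ (p / q)) π)
    (t : ℝ) (ht : 0 ≤ t) :
    ∫ x, |∫ y, f y ∂(P t x)| ^ p / φ x ^ (p / q) ∂π
      ≤ 2 ^ p * Cφ ^ (p / q) * Real.exp (-(β * p / q) * t) *
        ∫ x, |f x| ^ p / φ x ^ (p / q) ∂π :=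
  Lp_phi_growth_bound_of_exponential_phi_coupling_general P π hinv φ hφmeas hφ1 hφint Cφ β hCφ Z hZ1
    hZ2 hZcoupling p q hp hpq f hfmeas hf0 hfLpφ t ht
end

section
/- Let A be a nonnegative self-adjoint operator on a Hilbert space H with spectral measure P(dλ), and T_t = e^{-At}. Suppose D ⊂ H is a dense subspace such that for every f ∈ D there exists C(f) with ‖T_t f‖^2 ≤ C(f) e^{-βt} for all t ≥ 0. Then the spectral measure (P(dλ)f, f) is supported on [β, ∞) for every f ∈ H, and consequently ‖T_t f‖ ≤ e^{-βt/2}‖f‖ for all f ∈ H and t ≥ 0. -/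
/-!
For `f ∈ D` the decay hypothesis bounds the Laplace transform of the spectral measure,
`e^{-bt} (P((-∞,b])f,f) ≤ ∫ e^{-λt} (P(dλ)f,f) ≤ C e^{-βt}`, so for `b < β` letting
`t → ∞` kills the mass of `(-∞,b]`. Vanishing of `(P((-∞,β))f,f)` is a closed condition
in `f`, hence passes from the dense set `D` to all of `H`, and then
`‖T_t f‖² ≤ e^{-βt} ‖f‖²`.
-/

open MeasureTheory Set Filter Topology Real

theorem ae_le_iff_measure_Iio_eq_zero {μ : Measure ℝ} {a : ℝ} :
    (∀ᵐ x ∂μ, a ≤ x) ↔ μ (Iio a) = 0 := by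
  simp only [ae_iff, not_le]
  rfl

section LaplaceTransform

variable {μ : Measure ℝ} [IsFiniteMeasure μ]

theorem integrable_exp_neg_mul_of_ae_le {a t : ℝ} (hμ : ∀ᵐ x ∂μ, a ≤ x) (ht : 0 ≤ t) :
    Integrable (fun x => exp (-x * t)) μ :=
  Integrable.mono' (integrable_const (exp (-a * t))) (by fun_prop) <| by
    filter_upwards [hμ] with x hx
    rw [norm_of_nonneg (exp_pos _).le]
    exact exp_le_exp.2 (by nlinarith)

theorem integral_exp_neg_mul_le_of_ae_le {a t : ℝ} (hμ : ∀ᵐ x ∂μ, a ≤ x) (ht : 0 ≤ t) :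
    ∫ x, exp (-x * t) ∂μ ≤ exp (-a * t) * μ.real univ :=
  calc ∫ x, exp (-x * t) ∂μ ≤ ∫ _, exp (-a * t) ∂μ := by
        refine integral_mono_ae (integrable_exp_neg_mul_of_ae_le hμ ht)
          (integrable_const _) ?_
        filter_upwards [hμ] with x hx
        exact exp_le_exp.2 (by nlinarith)
    _ = exp (-a * t) * μ.real univ := by rw [integral_const, smul_eq_mul, mul_comm]

theorem exp_neg_mul_mul_measureReal_Iic_le_integral (hμ : ∀ᵐ x ∂μ, 0 ≤ x) {b t : ℝ}
    (ht : 0 ≤ t) : exp (-b * t) * μ.real (Iic b) ≤ ∫ x, exp (-x * t) ∂μ :=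
  calc exp (-b * t) * μ.real (Iic b)
      ≤ exp (-b * t) * μ.real {x | exp (-b * t) ≤ exp (-x * t)} := by
        refine mul_le_mul_of_nonneg_left (measureReal_mono fun x (hx : x ≤ b) => ?_)
          (exp_pos _).le
        exact exp_le_exp.2 (by nlinarith)
    _ ≤ ∫ x, exp (-x * t) ∂μ :=
        mul_meas_ge_le_integral_of_nonneg (ae_of_all _ fun _ => (exp_pos _).le)
          (integrable_exp_neg_mul_of_ae_le hμ ht) _

theorem measure_Iic_eq_zero_of_integral_exp_neg_mul_le (hμ : ∀ᵐ x ∂μ, 0 ≤ x) {b β C : ℝ}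
    (hb : b < β) (h : ∀ t, 0 ≤ t → ∫ x, exp (-x * t) ∂μ ≤ C * exp (-β * t)) :
    μ (Iic b) = 0 := by
  have hbound : ∀ t, 0 ≤ t → μ.real (Iic b) ≤ C * exp ((b - β) * t) := by
    intro t ht
    have hle := (exp_neg_mul_mul_measureReal_Iic_le_integral (b := b) hμ ht).trans (h t ht)
    rw [show C * exp (-β * t) = exp (-b * t) * (C * exp ((b - β) * t)) by
      rw [mul_left_comm, ← exp_add]; ring_nf] at hle
    exact le_of_mul_le_mul_left hle (exp_pos _)
  have hlim : Tendsto (fun t => C * exp ((b - β) * t)) atTop (𝓝 0) := by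
    simpa using (tendsto_exp_atBot.comp
      (tendsto_id.const_mul_atTop_of_neg (sub_neg.2 hb))).const_mul C
  have hnonpos : μ.real (Iic b) ≤ 0 :=
    ge_of_tendsto hlim ((eventually_ge_atTop 0).mono hbound)
  exact (measureReal_eq_zero_iff (measure_ne_top _ _)).1
    (le_antisymm hnonpos measureReal_nonneg)

theorem ae_le_of_integral_exp_neg_mul_le (hμ : ∀ᵐ x ∂μ, 0 ≤ x) {β C : ℝ}
    (h : ∀ t, 0 ≤ t → ∫ x, exp (-x * t) ∂μ ≤ C * exp (-β * t)) :
    ∀ᵐ x ∂μ, β ≤ x := by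
  have hrat : ∀ᵐ x ∂μ, ∀ q : ℚ, (q : ℝ) < β → (q : ℝ) < x := by
    refine ae_all_iff.2 fun q => ?_
    by_cases hq : (q : ℝ) < β
    · exact (measure_eq_zero_iff_ae_notMem.1
        (measure_Iic_eq_zero_of_integral_exp_neg_mul_le hμ hq h)).mono fun x hx _ => not_le.1 hx
    · exact ae_of_all _ fun _ hq' => absurd hq' hq
  filter_upwards [hrat] with x hx
  by_contra! hxβ
  obtain ⟨q, hxq, hqβ⟩ := exists_rat_btwn hxβ
  exact (hx q hqβ).not_gt hxq

end LaplaceTransform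

theorem isClosed_setOf_measure_eq_zero {X α : Type*} [TopologicalSpace X] [MeasurableSpace α]
    {ν : X → Measure α} [∀ f, IsFiniteMeasure (ν f)] {s : Set α}
    (hs : Continuous fun f => (ν f s).toReal) : IsClosed {f | ν f s = 0} := by
  convert (isClosed_singleton (x := (0 : ℝ))).preimage hs using 1
  ext f
  simp [ENNReal.toReal_eq_zero_iff, measure_ne_top]

theorem spectral_support_of_dense_decay_general
    {H : Type*} [NormedAddCommGroup H] [InnerProductSpace ℂ H]
    (T : ℝ → H →L[ℂ] H)
    (ν : H → Measure ℝ) (hνfin : ∀ f, IsFiniteMeasure (ν f))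
    -- ν f = (P(dλ)f,f) : total mass ‖f‖², supported on [0,∞)
    (hνtot : ∀ f : H, (ν f) univ = ENNReal.ofReal (‖f‖ ^ 2))
    (hνpos : ∀ f : H, (ν f) (Iio (0 : ℝ)) = 0)
    -- ‖T_t f‖² = ∫ e^{-λt} (P(dλ)f,f)
    (hT : ∀ (t : ℝ), 0 ≤ t → ∀ f : H,
      ‖T t f‖ ^ 2 = ∫ lam, Real.exp (-lam * t) ∂(ν f))
    -- (P(Δ)fₙ,fₙ) → (P(Δ)f,f) when fₙ → f (continuity of the quadratic form of `P(Δ)`)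
    (hνcont : ∀ s : Set ℝ, MeasurableSet s → Continuous (fun f : H => ((ν f) s).toReal))
    (β : ℝ)
    (D : Set H) (hdense : Dense D)
    (hdecay : ∀ f ∈ D, ∃ C : ℝ, ∀ t : ℝ, 0 ≤ t → ‖T t f‖ ^ 2 ≤ C * Real.exp (-β * t)) :
    (∀ f : H, (ν f) (Iio β) = 0) ∧
      (∀ f : H, ∀ t : ℝ, 0 ≤ t → ‖T t f‖ ≤ Real.exp (-β * t / 2) * ‖f‖) := by
  have := hνfin
  have hsupp : ∀ f, ν f (Iio β) = 0 := by
    refine hdense.induction (fun f hf => ?_)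
      (isClosed_setOf_measure_eq_zero (hνcont _ measurableSet_Iio))
    obtain ⟨C, hC⟩ := hdecay f hf
    exact ae_le_iff_measure_Iio_eq_zero.1 <| ae_le_of_integral_exp_neg_mul_le
      (ae_le_iff_measure_Iio_eq_zero.2 (hνpos f)) fun t ht => hT t ht f ▸ hC t ht
  refine ⟨hsupp, fun f t ht => ?_⟩
  have hsq : ‖T t f‖ ^ 2 ≤ (exp (-β * t / 2) * ‖f‖) ^ 2 :=
    calc ‖T t f‖ ^ 2 = ∫ x, exp (-x * t) ∂(ν f) := hT t ht f
      _ ≤ exp (-β * t) * (ν f).real univ :=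
          integral_exp_neg_mul_le_of_ae_le (ae_le_iff_measure_Iio_eq_zero.2 (hsupp f)) ht
      _ = (exp (-β * t / 2) * ‖f‖) ^ 2 := by
          rw [measureReal_def, hνtot, ENNReal.toReal_ofReal (by positivity), mul_pow,
            ← exp_nat_mul]
          ring_nf
  exact (pow_le_pow_iff_left₀ (norm_nonneg _) (by positivity) two_ne_zero).1 hsq

/-- If `A ≥ 0` is self-adjoint with spectral measure `P(dλ)` (here encoded through the scalar
spectral measures `ν f = (P(dλ)f,f)`), `T_t = e^{-At}`, and on a dense subspace `D` one has
`‖T_t f‖² ≤ C(f) e^{-βt}`, then every scalar spectral measure is supported on `[β,∞)` and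
`‖T_t f‖ ≤ e^{-βt/2}‖f‖` for all `f ∈ H`. -/
theorem spectral_support_of_dense_decay
    {H : Type*} [NormedAddCommGroup H] [InnerProductSpace ℂ H] [CompleteSpace H]
    (T : ℝ → H →L[ℂ] H)
    (ν : H → Measure ℝ) (hνfin : ∀ f, IsFiniteMeasure (ν f))
    -- ν f = (P(dλ)f,f) : total mass ‖f‖², supported on [0,∞)
    (hνtot : ∀ f : H, (ν f) univ = ENNReal.ofReal (‖f‖ ^ 2))
    (hνpos : ∀ f : H, (ν f) (Iio (0 : ℝ)) = 0)
    -- ‖T_t f‖² = ∫ e^{-λt} (P(dλ)f,f)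
    (hT : ∀ (t : ℝ), 0 ≤ t → ∀ f : H,
      ‖T t f‖ ^ 2 = ∫ lam, Real.exp (-lam * t) ∂(ν f))
    -- (P(Δ)fₙ,fₙ) → (P(Δ)f,f) when fₙ → f (continuity of the quadratic form of `P(Δ)`)
    (hνcont : ∀ s : Set ℝ, MeasurableSet s → Continuous (fun f : H => ((ν f) s).toReal))
    (β : ℝ) (hβ : 0 < β)
    (D : Set H) (hdense : Dense D)
    (hdecay : ∀ f ∈ D, ∃ C : ℝ, ∀ t : ℝ, 0 ≤ t → ‖T t f‖ ^ 2 ≤ C * Real.exp (-β * t)) :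
    (∀ f : H, (ν f) (Iio β) = 0) ∧
      (∀ f : H, ∀ t : ℝ, 0 ≤ t → ‖T t f‖ ≤ Real.exp (-β * t / 2) * ‖f‖) :=
  spectral_support_of_dense_decay_general T ν hνfin hνtot hνpos hT hνcont β D hdense hdecay
end

section
/- Let π be a probability measure on 𝕏, K ⊂ 𝕏 with π(K) > 0, and h ∈ L₂(π) with h = 0 on K. Then ∫ h² dπ - (∫ h dπ)² ≥ π(K) ∫ h² dπ. -/
open MeasureTheory Set
open scoped InnerProductSpace

/-! Since `h` vanishes on `K`, `∫ h dπ = ∫_{Kᶜ} h dπ`, and Cauchy–Schwarz on `Kᶜ` bounds its square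
by `π(Kᶜ) ∫ h² dπ = (1 - π(K)) ∫ h² dπ`. -/

theorem sq_integral_le_measureReal_univ_mul_integral_sq {α : Type*} [MeasurableSpace α]
    {μ : Measure α} [IsFiniteMeasure μ] {f : α → ℝ} (hf : MemLp f 2 μ) :
    (∫ x, f x ∂μ) ^ 2 ≤ μ.real univ * ∫ x, f x ^ 2 ∂μ := by
  set one : Lp ℝ 2 μ := indicatorConstLp 2 MeasurableSet.univ (measure_ne_top μ univ) 1
  set F : Lp ℝ 2 μ := hf.toLp f
  have h_one_F : ⟪one, F⟫_ℝ = ∫ x, f x ∂μ := by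
    rw [L2.inner_indicatorConstLp_one, setIntegral_univ]
    exact integral_congr_ae hf.coeFn_toLp
  have h_one_one : ⟪one, one⟫_ℝ = μ.real univ := by
    rw [L2.real_inner_indicatorConstLp_one_indicatorConstLp_one, inter_self]
  have h_F_F : ⟪F, F⟫_ℝ = ∫ x, f x ^ 2 ∂μ := by
    rw [L2.inner_def]
    refine integral_congr_ae (hf.coeFn_toLp.mono fun x hx => ?_)
    simp [F, hx, sq]
  calc (∫ x, f x ∂μ) ^ 2 = ⟪one, F⟫_ℝ * ⟪one, F⟫_ℝ := by rw [h_one_F, sq]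
    _ ≤ ⟪one, one⟫_ℝ * ⟪F, F⟫_ℝ := real_inner_mul_inner_self_le one F
    _ = μ.real univ * ∫ x, f x ^ 2 ∂μ := by rw [h_one_one, h_F_F]

theorem variance_lower_bound_of_vanishing_on_set_general
    {𝕏 : Type*} [MeasurableSpace 𝕏] (π : Measure 𝕏) [IsProbabilityMeasure π]
    (K : Set 𝕏) (hK : MeasurableSet K)
    (h : 𝕏 → ℝ) (hmem : MemLp h 2 π) (hzero : ∀ x ∈ K, h x = 0) :
    (π K).toReal * ∫ x, h x ^ 2 ∂π
      ≤ ∫ x, h x ^ 2 ∂π - (∫ x, h x ∂π) ^ 2 := by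
  have h_mean : ∫ x, h x ∂π = ∫ x in Kᶜ, h x ∂π :=
    (setIntegral_eq_integral_of_forall_compl_eq_zero fun x hx => hzero x (not_not.mp hx)).symm
  have h_cs : (∫ x in Kᶜ, h x ∂π) ^ 2 ≤ π.real Kᶜ * ∫ x in Kᶜ, h x ^ 2 ∂π := by
    simpa using sq_integral_le_measureReal_univ_mul_integral_sq (hmem.restrict Kᶜ)
  have h_restrict : ∫ x in Kᶜ, h x ^ 2 ∂π ≤ ∫ x, h x ^ 2 ∂π :=
    setIntegral_le_integral hmem.integrable_sq (.of_forall fun x => sq_nonneg (h x))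
  have h_compl : π.real Kᶜ = 1 - (π K).toReal := probReal_compl_eq_one_sub hK
  calc (π K).toReal * ∫ x, h x ^ 2 ∂π
      = ∫ x, h x ^ 2 ∂π - π.real Kᶜ * ∫ x, h x ^ 2 ∂π := by rw [h_compl]; ring
    _ ≤ ∫ x, h x ^ 2 ∂π - π.real Kᶜ * ∫ x in Kᶜ, h x ^ 2 ∂π := by gcongr
    _ ≤ ∫ x, h x ^ 2 ∂π - (∫ x, h x ∂π) ^ 2 := by rw [h_mean]; linarith

/-- If `h ∈ L₂(π)` vanishes on a set `K` with `π(K) > 0`, then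
`∫ h² dπ - (∫ h dπ)² ≥ π(K) ∫ h² dπ`. -/
theorem variance_lower_bound_of_vanishing_on_set
    {𝕏 : Type*} [MeasurableSpace 𝕏] (π : Measure 𝕏) [IsProbabilityMeasure π]
    (K : Set 𝕏) (hK : MeasurableSet K) (hKpos : 0 < π K)
    (h : 𝕏 → ℝ) (hmem : MemLp h 2 π) (hzero : ∀ x ∈ K, h x = 0) :
    (π K).toReal * ∫ x, h x ^ 2 ∂π
      ≤ ∫ x, h x ^ 2 ∂π - (∫ x, h x ∂π) ^ 2 :=
  variance_lower_bound_of_vanishing_on_set_general π K hK h hmem hzero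
end

section
/- Let Z = (Z¹, Z²) be a coupling where Z¹ has the law of a Markov process X started at x and Z² has the stationary law with invariant measure π. Then for every bounded measurable f (or f ∈ L₁(π)) with ∫ f dπ = 0: T_t f(x) = E[(f(Z¹_t) - f(Z²_t)) 1_{Z¹_t ≠ Z²_t}], and hence |T_t f(x) - ∫ f dπ| ≤ E[(|f(Z¹_t)| + |f(Z²_t)|) 1_{Z¹_t ≠ Z²_t}]. In particular, if X admits an exponential φ-coupling and |f| ≤ φ, then |T_t f(x) - ∫ f dπ| ≤ C_φ e^{-βt} φ(x); consequently X is exponentially φ-ergodic: ‖μ_t − π‖_{φ,var} ≤ C_φ e^{-βt} ∫ φ dμ for every initial distribution μ. -/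
/-!
Push the two marginals of the coupling forward: `∫ f ∂(P t x) - ∫ f ∂π` becomes the integral of
`f p.1 - f p.2` against the coupling, and this integrand vanishes on the diagonal. Hence only the
event `Z¹_t ≠ Z²_t` contributes, and for `|f| ≤ φ` its contribution is controlled by the
exponential `φ`-coupling bound. Integrating the resulting pointwise bound in the starting point
against `μ` gives `φ`-ergodicity.
-/

open MeasureTheory

section Coupling

variable {α : Type*} [MeasurableSpace α] {ν : Measure (α × α)} {μ₁ μ₂ : Measure α} {f : α → ℝ}

lemma integrable_comp_fst_of_map_fst (h₁ : ν.map Prod.fst = μ₁) (hf : Integrable f μ₁) :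
    Integrable (fun p : α × α => f p.1) ν :=
  (h₁ ▸ hf).comp_measurable measurable_fst

lemma integrable_comp_snd_of_map_snd (h₂ : ν.map Prod.snd = μ₂) (hf : Integrable f μ₂) :
    Integrable (fun p : α × α => f p.2) ν :=
  (h₂ ▸ hf).comp_measurable measurable_snd

lemma integral_sub_integral_eq_setIntegral_ne_of_coupling (h₁ : ν.map Prod.fst = μ₁)
    (h₂ : ν.map Prod.snd = μ₂) (hf₁ : Integrable f μ₁) (hf₂ : Integrable f μ₂) :
    ∫ y, f y ∂μ₁ - ∫ y, f y ∂μ₂ = ∫ p in {p : α × α | p.1 ≠ p.2}, (f p.1 - f p.2) ∂ν := by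
  have hfst : ∫ y, f y ∂μ₁ = ∫ p, f p.1 ∂ν := by
    rw [← h₁, integral_map measurable_fst.aemeasurable (h₁ ▸ hf₁.aestronglyMeasurable)]
  have hsnd : ∫ y, f y ∂μ₂ = ∫ p, f p.2 ∂ν := by
    rw [← h₂, integral_map measurable_snd.aemeasurable (h₂ ▸ hf₂.aestronglyMeasurable)]
  rw [hfst, hsnd, ← integral_sub (integrable_comp_fst_of_map_fst h₁ hf₁)
    (integrable_comp_snd_of_map_snd h₂ hf₂), setIntegral_eq_integral_of_forall_compl_eq_zero]
  intro p hp
  rw [show p.1 = p.2 from not_not.mp hp, sub_self]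

lemma abs_integral_sub_integral_le_setIntegral_ne_of_coupling (h₁ : ν.map Prod.fst = μ₁)
    (h₂ : ν.map Prod.snd = μ₂) (hf₁ : Integrable f μ₁) (hf₂ : Integrable f μ₂) :
    |∫ y, f y ∂μ₁ - ∫ y, f y ∂μ₂|
      ≤ ∫ p in {p : α × α | p.1 ≠ p.2}, (|f p.1| + |f p.2|) ∂ν := by
  have hfst := integrable_comp_fst_of_map_fst h₁ hf₁
  have hsnd := integrable_comp_snd_of_map_snd h₂ hf₂
  rw [integral_sub_integral_eq_setIntegral_ne_of_coupling h₁ h₂ hf₁ hf₂]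
  exact abs_integral_le_integral_abs.trans <|
    setIntegral_mono (hfst.sub hsnd).abs.integrableOn (hfst.abs.add hsnd.abs).integrableOn
      fun p => abs_sub _ _

lemma abs_integral_sub_integral_le_setIntegral_ne_of_abs_le {φ : α → ℝ}
    (h₁ : ν.map Prod.fst = μ₁) (h₂ : ν.map Prod.snd = μ₂) (hφ₁ : Integrable φ μ₁)
    (hφ₂ : Integrable φ μ₂) (hf : Measurable f) (hfφ : ∀ x, |f x| ≤ φ x) :
    |∫ y, f y ∂μ₁ - ∫ y, f y ∂μ₂|
      ≤ ∫ p in {p : α × α | p.1 ≠ p.2}, (φ p.1 + φ p.2) ∂ν := by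
  have hf_of_hφ {μ : Measure α} (hφ : Integrable φ μ) : Integrable f μ :=
    hφ.mono' hf.aestronglyMeasurable (ae_of_all _ hfφ)
  have hf₁ := hf_of_hφ hφ₁
  have hf₂ := hf_of_hφ hφ₂
  refine (abs_integral_sub_integral_le_setIntegral_ne_of_coupling h₁ h₂ hf₁ hf₂).trans <|
    setIntegral_mono ?_ ?_ fun p => add_le_add (hfφ p.1) (hfφ p.2)
  · exact ((integrable_comp_fst_of_map_fst h₁ hf₁).abs.add
      (integrable_comp_snd_of_map_snd h₂ hf₂).abs).integrableOn
  · exact ((integrable_comp_fst_of_map_fst h₁ hφ₁).add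
      (integrable_comp_snd_of_map_snd h₂ hφ₂)).integrableOn

end Coupling

lemma abs_integral_sub_le_mul_integral_of_abs_sub_le {α : Type*} [MeasurableSpace α]
    {μ : Measure α} [IsProbabilityMeasure μ] {g φ : α → ℝ} {c K : ℝ}
    (hg : AEStronglyMeasurable g μ) (hφ : Integrable φ μ) (hgφ : ∀ x, |g x - c| ≤ K * φ x) :
    |∫ x, g x ∂μ - c| ≤ K * ∫ x, φ x ∂μ := by
  have hgc : Integrable (fun x => g x - c) μ :=
    (hφ.const_mul K).mono' (hg.sub aestronglyMeasurable_const) (ae_of_all _ hgφ)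
  have hg_int : Integrable g μ :=
    (hgc.add (integrable_const c)).congr (ae_of_all _ fun x => sub_add_cancel (g x) c)
  calc |∫ x, g x ∂μ - c| = |∫ x, (g x - c) ∂μ| := by
        rw [integral_sub hg_int (integrable_const c), integral_const, probReal_univ, one_smul]
    _ ≤ ∫ x, |g x - c| ∂μ := abs_integral_le_integral_abs
    _ ≤ ∫ x, K * φ x ∂μ := integral_mono hgc.abs (hφ.const_mul K) hgφ
    _ = K * ∫ x, φ x ∂μ := integral_const_mul _ _

theorem coupling_representation_and_phi_ergodicity_general
    {𝕏 : Type*} [MeasurableSpace 𝕏]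
    (P : ℝ → 𝕏 → Measure 𝕏) [∀ t x, IsProbabilityMeasure (P t x)]
    (π : Measure 𝕏) [IsProbabilityMeasure π]
    (hTmeas : ∀ g : 𝕏 → ℝ, Measurable g → ∀ t : ℝ,
      Measurable (fun x => ∫ y, g y ∂(P t x)))
    (φ : 𝕏 → ℝ)
    (hφint : Integrable φ π) (hφPint : ∀ x t, 0 ≤ t → Integrable φ (P t x))
    (Cφ β : ℝ)
    -- exponential φ-coupling
    (Z : 𝕏 → ℝ → Measure (𝕏 × 𝕏))
    (hZ1 : ∀ x t, 0 ≤ t → (Z x t).map Prod.fst = P t x)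
    (hZ2 : ∀ x t, 0 ≤ t → (Z x t).map Prod.snd = π)
    (hZcoupling : ∀ x t, 0 ≤ t →
      ∫ p in {p : 𝕏 × 𝕏 | p.1 ≠ p.2}, (φ p.1 + φ p.2) ∂(Z x t)
        ≤ Cφ * Real.exp (-β * t) * φ x) :
    -- (1),(2): representation and bound for bounded mean-zero f
    (∀ f : 𝕏 → ℝ, Measurable f → (∃ B, ∀ x, |f x| ≤ B) → (∫ x, f x ∂π) = 0 →
      ∀ t : ℝ, 0 ≤ t → ∀ x : 𝕏,
        (∫ y, f y ∂(P t x)) = ∫ p in {p : 𝕏 × 𝕏 | p.1 ≠ p.2}, (f p.1 - f p.2) ∂(Z x t) ∧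
        |∫ y, f y ∂(P t x)|
          ≤ ∫ p in {p : 𝕏 × 𝕏 | p.1 ≠ p.2}, (|f p.1| + |f p.2|) ∂(Z x t)) ∧
    -- (3): for |f| ≤ φ, |T_t f(x) − ∫ f dπ| ≤ C_φ e^{-βt} φ(x)
    (∀ f : 𝕏 → ℝ, Measurable f → (∀ x, |f x| ≤ φ x) →
      ∀ t : ℝ, 0 ≤ t → ∀ x : 𝕏,
        |(∫ y, f y ∂(P t x)) - ∫ y, f y ∂π| ≤ Cφ * Real.exp (-β * t) * φ x) ∧
    -- (4): exponential φ-ergodicity: ‖μ_t − π‖_{φ,var} ≤ C_φ e^{-βt} ∫ φ dμ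
    (∀ μ : Measure 𝕏, IsProbabilityMeasure μ → Integrable φ μ →
      ∀ f : 𝕏 → ℝ, Measurable f → (∀ x, |f x| ≤ φ x) →
      ∀ t : ℝ, 0 ≤ t →
        |(∫ x, (∫ y, f y ∂(P t x)) ∂μ) - ∫ y, f y ∂π|
          ≤ Cφ * Real.exp (-β * t) * ∫ x, φ x ∂μ) := by
  have pointwise_bound : ∀ f : 𝕏 → ℝ, Measurable f → (∀ x, |f x| ≤ φ x) →
      ∀ t : ℝ, 0 ≤ t → ∀ x : 𝕏,
        |(∫ y, f y ∂(P t x)) - ∫ y, f y ∂π| ≤ Cφ * Real.exp (-β * t) * φ x :=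
    fun f hf hfφ t ht x =>
      (abs_integral_sub_integral_le_setIntegral_ne_of_abs_le (hZ1 x t ht) (hZ2 x t ht)
        (hφPint x t ht) hφint hf hfφ).trans (hZcoupling x t ht)
  refine ⟨fun f hf ⟨B, hB⟩ hmean t ht x => ?_, pointwise_bound,
    fun μ _ hφμ f hf hfφ t ht => ?_⟩
  · have hf_int {μ : Measure 𝕏} [IsProbabilityMeasure μ] : Integrable f μ :=
      .of_bound hf.aestronglyMeasurable B (ae_of_all _ hB)
    have hrepr := integral_sub_integral_eq_setIntegral_ne_of_coupling (hZ1 x t ht) (hZ2 x t ht)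
      hf_int hf_int
    have hbound := abs_integral_sub_integral_le_setIntegral_ne_of_coupling (hZ1 x t ht)
      (hZ2 x t ht) hf_int hf_int
    rw [hmean, sub_zero] at hrepr hbound
    exact ⟨hrepr, hbound⟩
  · exact abs_integral_sub_le_mul_integral_of_abs_sub_le (hTmeas f hf t).aestronglyMeasurable
      hφμ (pointwise_bound f hf hfφ t ht)

/-- Coupling representation of `T_t f` and exponential `φ`-ergodicity of a process admitting an
exponential `φ`-coupling. The `φ`-variation distance is expressed through test functions
`|f| ≤ φ`. -/
theorem coupling_representation_and_phi_ergodicity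
    {𝕏 : Type*} [MeasurableSpace 𝕏]
    (P : ℝ → 𝕏 → Measure 𝕏) [∀ t x, IsProbabilityMeasure (P t x)]
    (π : Measure 𝕏) [IsProbabilityMeasure π]
    (hinv : ∀ t : ℝ, 0 ≤ t → ∀ A : Set 𝕏, MeasurableSet A →
      ∫⁻ x, P t x A ∂π = π A)
    (hTmeas : ∀ g : 𝕏 → ℝ, Measurable g → ∀ t : ℝ,
      Measurable (fun x => ∫ y, g y ∂(P t x)))
    (φ : 𝕏 → ℝ) (hφmeas : Measurable φ) (hφ1 : ∀ x, 1 ≤ φ x)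
    (hφint : Integrable φ π) (hφPint : ∀ x t, 0 ≤ t → Integrable φ (P t x))
    (Cφ β : ℝ) (hCφ : 0 < Cφ) (hβ : 0 < β)
    -- exponential φ-coupling
    (Z : 𝕏 → ℝ → Measure (𝕏 × 𝕏))
    (hZ1 : ∀ x t, 0 ≤ t → (Z x t).map Prod.fst = P t x)
    (hZ2 : ∀ x t, 0 ≤ t → (Z x t).map Prod.snd = π)
    (hZcoupling : ∀ x t, 0 ≤ t →
      ∫ p in {p : 𝕏 × 𝕏 | p.1 ≠ p.2}, (φ p.1 + φ p.2) ∂(Z x t)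
        ≤ Cφ * Real.exp (-β * t) * φ x) :
    -- (1),(2): representation and bound for bounded mean-zero f
    (∀ f : 𝕏 → ℝ, Measurable f → (∃ B, ∀ x, |f x| ≤ B) → (∫ x, f x ∂π) = 0 →
      ∀ t : ℝ, 0 ≤ t → ∀ x : 𝕏,
        (∫ y, f y ∂(P t x)) = ∫ p in {p : 𝕏 × 𝕏 | p.1 ≠ p.2}, (f p.1 - f p.2) ∂(Z x t) ∧
        |∫ y, f y ∂(P t x)|
          ≤ ∫ p in {p : 𝕏 × 𝕏 | p.1 ≠ p.2}, (|f p.1| + |f p.2|) ∂(Z x t)) ∧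
    -- (3): for |f| ≤ φ, |T_t f(x) − ∫ f dπ| ≤ C_φ e^{-βt} φ(x)
    (∀ f : 𝕏 → ℝ, Measurable f → (∀ x, |f x| ≤ φ x) →
      ∀ t : ℝ, 0 ≤ t → ∀ x : 𝕏,
        |(∫ y, f y ∂(P t x)) - ∫ y, f y ∂π| ≤ Cφ * Real.exp (-β * t) * φ x) ∧
    -- (4): exponential φ-ergodicity: ‖μ_t − π‖_{φ,var} ≤ C_φ e^{-βt} ∫ φ dμ
    (∀ μ : Measure 𝕏, IsProbabilityMeasure μ → Integrable φ μ →
      ∀ f : 𝕏 → ℝ, Measurable f → (∀ x, |f x| ≤ φ x) →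
      ∀ t : ℝ, 0 ≤ t →
        |(∫ x, (∫ y, f y ∂(P t x)) ∂μ) - ∫ y, f y ∂π|
          ≤ Cφ * Real.exp (-β * t) * ∫ x, φ x ∂μ) :=
  coupling_representation_and_phi_ergodicity_general P π hTmeas φ hφint hφPint Cφ β Z hZ1 hZ2
    hZcoupling
end
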